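/- For λ, μ ∈ ℂ* and α, β ∈ ℂ, the Neveu-Schwarz modules Ω_NS(λ, α) and Ω_NS(μ, β) are isomorphic as NS-modules if and only if λ = μ and α = β. -/

import Mathlib

open Polynomial

/-- `L_m` on the even part `ℂ[x]` of `Ω_NS(λ,α)`: `f ↦ λ^m (x + mα) f(x+m)`. -/
noncomputable def l0 (l a : ℂ) (m : ℤ) (f : Polynomial ℂ) : Polynomial ℂ :=
  l ^ m • ((X + C ((m : ℂ) * a)) * f.comp (X + C (m : ℂ)))

/-- `L_m` on the odd part `ℂ[y]`: `g ↦ λ^m (y + m(α+1/2)) g(y+m)`. -/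
noncomputable def nl1 (l a : ℂ) (m : ℤ) (g : Polynomial ℂ) : Polynomial ℂ :=
  l ^ m • ((X + C ((m : ℂ) * (a + 1/2))) * g.comp (X + C (m : ℂ)))

/-- `G_r` (with `r = k + 1/2`, `k ∈ ℤ`) from the even to the odd part:
`f(x) ↦ λ^{r−1/2} f(y+r)`. -/
noncomputable def ng01 (l : ℂ) (k : ℤ) (f : Polynomial ℂ) : Polynomial ℂ :=
  l ^ k • f.comp (X + C ((k : ℂ) + 1/2))

/-- `G_r` (with `r = k + 1/2`) from the odd to the even part:
`g(y) ↦ λ^{r+1/2} (x + 2rα) g(x+r)`. -/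
noncomputable def ng10 (l a : ℂ) (k : ℤ) (g : Polynomial ℂ) : Polynomial ℂ :=
  l ^ (k + 1) • ((X + C (2 * ((k : ℂ) + 1/2) * a)) * g.comp (X + C ((k : ℂ) + 1/2)))

/-- An isomorphism of `NS`-modules `Ω_NS(λ,α) → Ω_NS(μ,β)`: a pair of linear equivalences
of the even and odd parts intertwining the actions of all `L_m` and `G_r`. -/
def NSModIso (l a mu b : ℂ) : Prop :=
  ∃ (e0 e1 : Polynomial ℂ ≃ₗ[ℂ] Polynomial ℂ), ∀ (m k : ℤ) (f g : Polynomial ℂ),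
    e0 (l0 l a m f) = l0 mu b m (e0 f)
    ∧ e1 (nl1 l a m g) = nl1 mu b m (e1 g)
    ∧ e1 (ng01 l k f) = ng01 mu k (e0 f)
    ∧ e0 (ng10 l a k g) = ng10 mu b k (e1 g)

/-! `L_0` acts on the even part `ℂ[x]` as multiplication by `x`, so an isomorphism commutes with
multiplication by `x` and is therefore multiplication by a polynomial; being invertible, that
polynomial is a nonzero constant. Such a map commutes with every `L_m`, so `L_1 1 = λ (x + α)`
computed in both modules must coincide, which gives `λ = μ` and `α = β`. -/

theorem Polynomial.map_eq_mul_map_one_of_map_X_mul {R : Type*} [CommSemiring R]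
    (φ : R[X] →ₗ[R] R[X]) (hφ : ∀ f, φ (X * f) = X * φ f) (f : R[X]) : φ f = f * φ 1 := by
  have hpow : ∀ n : ℕ, φ (X ^ n) = X ^ n * φ 1 := by
    intro n
    induction n with
    | zero => simp
    | succ n ih => rw [pow_succ', hφ, ih, mul_assoc]
  induction f using Polynomial.induction_on' with
  | add p q hp hq => rw [map_add, hp, hq, add_mul]
  | monomial n c => rw [← C_mul_X_pow_eq_monomial, C_mul', map_smul, hpow, smul_mul_assoc]

theorem Polynomial.exists_isUnit_eq_C_mul_of_map_X_mul {R : Type*} [CommRing R] [IsDomain R]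
    (e : R[X] ≃ₗ[R] R[X]) (he : ∀ f, e (X * f) = X * e f) :
    ∃ c : R, IsUnit c ∧ ∀ f, e f = C c * f := by
  have hmul (f : R[X]) : e f = f * e 1 :=
    Polynomial.map_eq_mul_map_one_of_map_X_mul e.toLinearMap he f
  obtain ⟨f, hf⟩ := e.surjective 1
  have hunit : IsUnit (e 1) :=
    IsUnit.of_mul_eq_one f (by rw [mul_comm, ← hmul f, hf])
  obtain ⟨c, hc, hce⟩ := Polynomial.isUnit_iff.mp hunit
  exact ⟨c, hc, fun f => by rw [hce, mul_comm]; exact hmul f⟩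

section EvenPart

variable (l a : ℂ)

theorem l0_zero (f : ℂ[X]) : l0 l a 0 f = X * f := by
  simp [l0]

theorem l0_C_mul (m : ℤ) (c : ℂ) (f : ℂ[X]) : l0 l a m (C c * f) = C c * l0 l a m f := by
  simp only [l0, mul_comp, C_comp, smul_eq_C_mul]
  ring

theorem l0_one_one : l0 l a 1 1 = C l * X + C (l * a) := by
  simp only [l0, Int.cast_one, one_mul, one_comp, mul_one, zpow_one, smul_eq_C_mul, C_mul]
  ring

end EvenPart

theorem eq_of_l0_one_one_eq {l mu a b : ℂ} (hmu : mu ≠ 0) (h : l0 l a 1 1 = l0 mu b 1 1) :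
    l = mu ∧ a = b := by
  rw [l0_one_one, l0_one_one] at h
  have hX := congrArg (coeff · 1) h
  have hC := congrArg (coeff · 0) h
  simp only [coeff_add, coeff_C_mul_X, coeff_C, if_true] at hX hC
  norm_num at hX hC
  subst hX
  exact ⟨rfl, mul_left_cancel₀ hmu hC⟩

theorem ns_iso_iff_general (l mu a b : ℂ) (hmu : mu ≠ 0) :
    NSModIso l a mu b ↔ l = mu ∧ a = b := by
  constructor
  · rintro ⟨e0, _, h⟩
    obtain ⟨c, hc, he0⟩ := Polynomial.exists_isUnit_eq_C_mul_of_map_X_mul e0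
      (fun f => by simpa only [l0_zero] using (h 0 0 f 0).1)
    refine eq_of_l0_one_one_eq hmu ((hc.map C).mul_left_cancel ?_)
    simpa only [he0, l0_C_mul] using (h 1 0 1 0).1
  · rintro ⟨rfl, rfl⟩
    exact ⟨LinearEquiv.refl ℂ _, LinearEquiv.refl ℂ _, by simp⟩

/-- `Ω_NS(λ,α) ≅ Ω_NS(μ,β)` as `NS`-modules iff `λ = μ` and `α = β`. -/
theorem ns_iso_iff (l mu a b : ℂ) (hl : l ≠ 0) (hmu : mu ≠ 0) :
    NSModIso l a mu b ↔ l = mu ∧ a = b :=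
  ns_iso_iff_general l mu a b hmu
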